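/- (Shen–Yu monotone improvement) Let X ⊆ ℝⁿ, N_m : X → ℝ nonnegative, D_m : X → ℝ positive, and g(x, y) = Σ_{m=1}^M (2 y_m √(N_m(x)) − y_m² D_m(x)). Fix x₀ ∈ X and set y⁰_m = √(N_m(x₀))/D_m(x₀). If x* ∈ X satisfies g(x*, y⁰) ≥ g(x, y⁰) for all x ∈ X, then Σ_m N_m(x*)/D_m(x*) ≥ Σ_m N_m(x₀)/D_m(x₀). -/

import Mathlib

/-!
Completing the square gives `2 y √N - y² D = N / D - D (y - √N / D)²`, so the quadratic transform
`g(x, y)` is a lower bound of `F(x)` for every `y`, attained at `y = √N(x) / D(x)`. Hence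
`F(x₀) = g(x₀, y⁰) ≤ g(x*, y⁰) ≤ F(x*)`.
-/

open Finset

theorem two_mul_mul_sub_sq_mul_le_sq_div (y s : ℝ) {d : ℝ} (hd : 0 < d) :
    2 * y * s - y ^ 2 * d ≤ s ^ 2 / d := by
  rw [le_div_iff₀ hd]
  nlinarith [sq_nonneg (s - y * d)]

theorem two_mul_div_mul_sub_div_sq_mul_eq_sq_div (s : ℝ) {d : ℝ} (hd : d ≠ 0) :
    2 * (s / d) * s - (s / d) ^ 2 * d = s ^ 2 / d := by
  field_simp
  ring

section QuadraticTransform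

variable {ι : Type*} (t : Finset ι) {a d : ι → ℝ}

theorem sum_quadratic_transform_le (y : ι → ℝ) (ha : ∀ i ∈ t, 0 ≤ a i) (hd : ∀ i ∈ t, 0 < d i) :
    ∑ i ∈ t, (2 * y i * √(a i) - y i ^ 2 * d i) ≤ ∑ i ∈ t, a i / d i :=
  sum_le_sum fun i hi => by
    simpa [Real.sq_sqrt (ha i hi)] using
      two_mul_mul_sub_sq_mul_le_sq_div (y i) √(a i) (hd i hi)

theorem sum_quadratic_transform_sqrt_div_eq (ha : ∀ i ∈ t, 0 ≤ a i) (hd : ∀ i ∈ t, d i ≠ 0) :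
    ∑ i ∈ t, (2 * (√(a i) / d i) * √(a i) - (√(a i) / d i) ^ 2 * d i) = ∑ i ∈ t, a i / d i :=
  sum_congr rfl fun i hi => by
    rw [two_mul_div_mul_sub_div_sq_mul_eq_sq_div _ (hd i hi), Real.sq_sqrt (ha i hi)]

end QuadraticTransform

theorem shen_yu_improvement
    (n M : ℕ) (X : Set (Fin n → ℝ))
    (N D : Fin M → (Fin n → ℝ) → ℝ)
    (hN : ∀ m, ∀ x ∈ X, 0 ≤ N m x) (hD : ∀ m, ∀ x ∈ X, 0 < D m x)
    (x0 : Fin n → ℝ) (hx0 : x0 ∈ X)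
    (y0 : Fin M → ℝ) (hy0 : ∀ m, y0 m = Real.sqrt (N m x0) / D m x0)
    (xstar : Fin n → ℝ) (hxstar : xstar ∈ X)
    (hmax : ∀ x ∈ X,
      ∑ m, (2 * y0 m * Real.sqrt (N m x) - (y0 m) ^ 2 * D m x) ≤
      ∑ m, (2 * y0 m * Real.sqrt (N m xstar) - (y0 m) ^ 2 * D m xstar)) :
    ∑ m, N m x0 / D m x0 ≤ ∑ m, N m xstar / D m xstar := by
  have hy0_fun : y0 = fun m => √(N m x0) / D m x0 := funext hy0
  calc ∑ m, N m x0 / D m x0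
      = ∑ m, (2 * y0 m * √(N m x0) - y0 m ^ 2 * D m x0) := by
        rw [hy0_fun]
        exact (sum_quadratic_transform_sqrt_div_eq _ (fun m _ => hN m x0 hx0)
          fun m _ => (hD m x0 hx0).ne').symm
    _ ≤ ∑ m, (2 * y0 m * √(N m xstar) - y0 m ^ 2 * D m xstar) := hmax x0 hx0
    _ ≤ ∑ m, N m xstar / D m xstar :=
        sum_quadratic_transform_le _ y0 (fun m _ => hN m xstar hxstar) fun m _ => hD m xstar hxstar
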